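/- Let n ≥ 2, let z₀, q₁, …, q_n ∈ ℂ be distinct points, let m₀ ≥ 1 and k₁, …, k_n ≥ 2 be integers with m₀ − (k₁ + ⋯ + k_n) = −2, and let c ∈ ℂ, c ≠ 0. Then the rational function g(z) = c·(z − z₀)^{m₀} / ∏_{j=1}^n (z − q_j)^{k_j} cannot have vanishing residue at every q_j; that is, there exists some j such that the coefficient of (z − q_j)^{−1} in the Laurent expansion of g at q_j is nonzero. -/

import Mathlib

open Finset

/-!
If all residues vanish, partial fractions give a rational antiderivative `f = P / Q` of
`g`, with `Q = ∏ j, (z - q j) ^ (k j - 1)`; since `n ≥ 2`, both `P` and `Q` have degree at most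
`m₀`. As `f'` vanishes to order `m₀` at `z₀`, the numerator `Q(z₀) P - P(z₀) Q` of
`f - f(z₀)` vanishes to order `m₀ + 1` there, yet it is a nonzero polynomial of degree
at most `m₀`.
-/

open Polynomial Topology

namespace Polynomial

section CommRing

variable {R : Type*} [CommRing R]

theorem derivative_X_sub_C_pow_mul_X_sub_C (a : R) (l : ℕ) :
    derivative ((X - C a) ^ l) * (X - C a) = C (l : R) * (X - C a) ^ l := by
  cases l with
  | zero => simp
  | succ l => rw [derivative_X_sub_C_pow, Nat.add_sub_cancel, mul_assoc, ← pow_succ]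

theorem wronskian_mul_mul (c a b : R[X]) : wronskian (c * a) (c * b) = c ^ 2 * wronskian a b := by
  simp only [wronskian, derivative_mul]
  ring

/-- `(N i / D i)' = A i / G i` for all `i` implies `(∑ i, N i / D i)' = ∑ i, A i / G i`,
with all denominators cleared. -/
theorem wronskian_prod_sum_mul_prod_erase {ι : Type*} [DecidableEq ι] (s : Finset ι)
    {D N G A : ι → R[X]} (h : ∀ i ∈ s, wronskian (D i) (N i) * G i = A i * D i ^ 2) :
    wronskian (∏ i ∈ s, D i) (∑ i ∈ s, N i * ∏ j ∈ s.erase i, D j) * ∏ i ∈ s, G i =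
      (∑ i ∈ s, A i * ∏ j ∈ s.erase i, G j) * (∏ i ∈ s, D i) ^ 2 := by
  have hsum : wronskian (∏ i ∈ s, D i) (∑ i ∈ s, N i * ∏ j ∈ s.erase i, D j) =
      ∑ i ∈ s, wronskian (∏ i ∈ s, D i) (N i * ∏ j ∈ s.erase i, D j) :=
    map_sum (wronskianBilin R _) _ _
  rw [hsum, sum_mul, sum_mul]
  refine sum_congr rfl fun i hi => ?_
  rw [← mul_prod_erase s D hi, ← mul_prod_erase s G hi, mul_comm (D i), mul_comm (N i),
    wronskian_mul_mul]
  linear_combination (∏ j ∈ s.erase i, D j) ^ 2 * (∏ j ∈ s.erase i, G j) * h i hi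

theorem exists_eq_sum_mul_prod_erase [Nontrivial R] {ι : Type*} [DecidableEq ι] {s : Finset ι}
    {f : R[X]} {g : ι → R[X]} (hg : ∀ i ∈ s, (g i).Monic)
    (hgg : Set.Pairwise s fun i j => IsCoprime (g i) (g j))
    (hf : f.degree < (∏ i ∈ s, g i).degree) :
    ∃ r : ι → R[X], (∀ i ∈ s, (r i).degree < (g i).degree) ∧
      f = ∑ i ∈ s, r i * ∏ j ∈ s.erase i, g j := by
  obtain ⟨q, r, hr, hfqr⟩ := eq_quo_mul_prod_add_sum_rem_mul_prod f hg hgg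
  refine ⟨r, hr, ?_⟩
  have hmonic : (∏ i ∈ s, g i).Monic := monic_prod_of_monic s g hg
  have hsum : (∑ i ∈ s, r i * ∏ j ∈ s.erase i, g j).degree < (∏ i ∈ s, g i).degree := by
    refine (degree_sum_le _ _).trans_lt ((Finset.sup_lt_iff ?_).2 fun i hi => ?_)
    · exact bot_lt_iff_ne_bot.2 (degree_ne_bot.2 hmonic.ne_zero)
    have herase : (∏ j ∈ s.erase i, g j).Monic :=
      monic_prod_of_monic _ g fun j hj => hg j (mem_of_mem_erase hj)
    rw [← mul_prod_erase s g hi, herase.degree_mul, herase.degree_mul]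
    exact WithBot.add_lt_add_right (degree_ne_bot.2 herase.ne_zero) (hr i hi)
  rw [← sub_eq_zero]
  by_contra hne
  exact hmonic.not_dvd_of_degree_lt hne ((degree_sub_le _ _).trans_lt (max_lt hf hsum))
    ⟨q, by rw [hfqr]; ring⟩

theorem eval_prod_X_sub_C_pow_ne_zero [Nontrivial R] [NoZeroDivisors R] {ι : Type*}
    {s : Finset ι} {q : ι → R} {z : R} (e : ι → ℕ) (hz : ∀ i ∈ s, z ≠ q i) :
    (∏ i ∈ s, (X - C (q i)) ^ e i).eval z ≠ 0 := by
  rw [eval_prod, prod_ne_zero_iff]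
  intro i hi
  simpa only [eval_pow, eval_sub, eval_X, eval_C] using pow_ne_zero (e i) (sub_ne_zero.2 (hz i hi))

end CommRing

section Field

variable {K : Type*} [Field K] [CharZero K]

theorem exists_derivative_mul_X_sub_C_sub_eq (a : K) (d : ℕ) {r : K[X]}
    (hr : (taylor a r).coeff d = 0) :
    ∃ S : K[X], S.natDegree ≤ r.natDegree ∧ derivative S * (X - C a) - C (d : K) * S = r := by
  set c := (taylor a r).coeff
  -- the term `l = d` gets the junk coefficient `c d / 0 = 0`, which is harmless as `c d = 0`
  refine ⟨∑ l ∈ range (r.natDegree + 1), C (c l / (l - d)) * (X - C a) ^ l, ?_, ?_⟩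
  · refine natDegree_sum_le_of_forall_le _ _ fun l hl => (natDegree_C_mul_le _ _).trans ?_
    rw [natDegree_pow, natDegree_X_sub_C, mul_one]
    exact Nat.lt_succ_iff.1 (mem_range.1 hl)
  have hexp : r = ∑ l ∈ range (r.natDegree + 1), C (c l) * (X - C a) ^ l := by
    conv_lhs => rw [← sum_taylor_eq r a]
    exact sum_over_range' _ (fun _ => by simp) _ (by rw [natDegree_taylor]; omega)
  conv_rhs => rw [hexp]
  simp only [map_sum, sum_mul, mul_sum, ← sum_sub_distrib]
  refine sum_congr rfl fun l _ => ?_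
  rw [derivative_C_mul, mul_assoc, derivative_X_sub_C_pow_mul_X_sub_C, ← mul_assoc,
    ← mul_assoc, ← C_mul, ← C_mul, ← sub_mul, ← C_sub]
  congr 2
  rcases eq_or_ne l d with rfl | hld
  · simp [hr]
  · have : (l : K) - d ≠ 0 := sub_ne_zero.2 (Nat.cast_injective.ne hld)
    field_simp

/-- If the residue of `r / (X - a) ^ (d + 1)` at `a` vanishes, it has an antiderivative
`S / (X - a) ^ d`; here and below `wronskian D N * G = A * D ^ 2` encodes `(N / D)' = A / G`. -/
theorem exists_wronskian_X_sub_C_pow_eq (a : K) (d : ℕ) {r : K[X]}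
    (hr : (taylor a r).coeff d = 0) :
    ∃ S : K[X], S.natDegree ≤ r.natDegree ∧
      wronskian ((X - C a) ^ d) S * (X - C a) ^ (d + 1) = r * ((X - C a) ^ d) ^ 2 := by
  obtain ⟨S, hdeg, hS⟩ := exists_derivative_mul_X_sub_C_sub_eq a d hr
  refine ⟨S, hdeg, ?_⟩
  have hD := derivative_X_sub_C_pow_mul_X_sub_C a d
  rw [wronskian, pow_succ]
  linear_combination ((X - C a) ^ d) ^ 2 * hS - (X - C a) ^ d * S * hD

theorem pow_succ_dvd_of_pow_dvd_wronskian {Q H : K[X]} {a : K} {m : ℕ} (hH : H.IsRoot a)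
    (hQ : ¬Q.IsRoot a) (hW : (X - C a) ^ m ∣ wronskian Q H) : (X - C a) ^ (m + 1) ∣ H := by
  rcases eq_or_ne H 0 with rfl | hH0
  · exact dvd_zero _
  have hQ0 : Q ≠ 0 := by rintro rfl; exact hQ (by simp)
  have hH'0 : derivative H ≠ 0 := fun h => hH0 <| by
    rw [eq_C_of_derivative_eq_zero h] at hH ⊢
    simpa using hH
  rw [← le_rootMultiplicity_iff hH0]
  by_contra! hlt
  have hdvd : (X - C a) ^ H.rootMultiplicity a ∣ Q * derivative H := by
    have hQH : Q * derivative H = wronskian Q H + derivative Q * H := by rw [wronskian]; ring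
    rw [hQH]
    exact ((pow_dvd_pow _ (by omega)).trans hW).add
      (dvd_mul_of_dvd_right (pow_rootMultiplicity_dvd H a) _)
  have hle := (le_rootMultiplicity_iff (mul_ne_zero hQ0 hH'0)).2 hdvd
  rw [rootMultiplicity_mul (mul_ne_zero hQ0 hH'0), rootMultiplicity_eq_zero hQ,
    derivative_rootMultiplicity_of_root hH] at hle
  have := (rootMultiplicity_pos hH0).2 hH
  omega

/-- The numerator `Q(a) P - P(a) Q` of `P / Q - (P / Q)(a)` vanishes to order `m + 1` at `a`. -/
theorem lt_max_natDegree_of_wronskian_mul_eq {P Q G : K[X]} {a c : K} {m : ℕ} (hc : c ≠ 0)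
    (hQ : ¬Q.IsRoot a) (hG : ¬G.IsRoot a)
    (h : wronskian Q P * G = C c * (X - C a) ^ m * Q ^ 2) :
    m < max P.natDegree Q.natDegree := by
  have hQ0 : Q ≠ 0 := by rintro rfl; exact hQ (by simp)
  set H := C (Q.eval a) * P - C (P.eval a) * Q
  have hWH : wronskian Q H = C (Q.eval a) * wronskian Q P := by
    simp only [H, wronskian, derivative_sub, derivative_mul, derivative_C]
    ring
  have hW0 : wronskian Q P ≠ 0 := by
    rintro hW
    rw [hW, zero_mul] at h
    exact (mul_ne_zero (mul_ne_zero (C_ne_zero.2 hc) (pow_ne_zero _ (X_sub_C_ne_zero a)))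
      (pow_ne_zero _ hQ0)) h.symm
  have hH0 : H ≠ 0 := by
    rintro hH
    rw [hH, wronskian_zero_right] at hWH
    exact mul_ne_zero (C_ne_zero.2 hQ) hW0 hWH.symm
  have hcop : IsCoprime ((X - C a) ^ m) G :=
    ((irreducible_X_sub_C a).coprime_iff_not_dvd.2 (by rwa [dvd_iff_isRoot])).pow_left
  have hdvd : (X - C a) ^ m ∣ wronskian Q H :=
    hWH ▸ dvd_mul_of_dvd_right (hcop.dvd_of_dvd_mul_right ⟨C c * Q ^ 2, by rw [h]; ring⟩) _
  have hH : H.IsRoot a := by simp [H, mul_comm]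
  have hdeg := natDegree_le_of_dvd (pow_succ_dvd_of_pow_dvd_wronskian hH hQ hdvd) hH0
  rw [natDegree_pow, natDegree_X_sub_C, mul_one] at hdeg
  have hHdeg : H.natDegree ≤ max P.natDegree Q.natDegree :=
    (natDegree_sub_le _ _).trans (max_le_max (natDegree_C_mul_le _ _) (natDegree_C_mul_le _ _))
  omega

end Field

section Analytic

variable {𝕜 : Type*} [NontriviallyNormedField 𝕜]

theorem iteratedDeriv_eval_div_eval_of_dvd {A B r : 𝕜[X]} {a : 𝕜} {m s : ℕ} (hms : m < s)
    (hB : B.eval a ≠ 0) (h : (X - C a) ^ s ∣ A - r * B) :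
    iteratedDeriv m (fun z => A.eval z / B.eval z) a = (derivative^[m] r).eval a := by
  induction m generalizing s A B r with
  | zero =>
    have hroot : (A - r * B).IsRoot a :=
      dvd_iff_isRoot.1 ((dvd_pow_self _ (by omega)).trans h)
    simp only [IsRoot.def, eval_sub, eval_mul, sub_eq_zero] at hroot
    simp [hroot, hB]
  | succ m ih =>
    have hderiv : deriv (fun z => A.eval z / B.eval z) =ᶠ[𝓝 a]
        fun z => (derivative A * B - A * derivative B).eval z / (B ^ 2).eval z := by
      filter_upwards [B.continuous.continuousAt.eventually_ne hB] with z hz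
      simp only [eval_sub, eval_mul, eval_pow]
      exact ((A.hasDerivAt z).div (B.hasDerivAt z) hz).deriv
    -- `A' B - A B' - r' B ^ 2 = (A - r B)' B - (A - r B) B'`
    have hdvd : (X - C a) ^ (s - 1) ∣
        derivative A * B - A * derivative B - derivative r * B ^ 2 := by
      convert ((pow_sub_one_dvd_derivative_of_pow_dvd h).mul_right B).sub
        (((pow_dvd_pow _ (s.sub_le 1)).trans h).mul_right (derivative B)) using 1
      simp only [derivative_sub, derivative_mul]
      ring
    rw [iteratedDeriv_succ', hderiv.iteratedDeriv_eq, ih (by omega) (by simpa using hB) hdvd,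
      Function.iterate_succ_apply]

theorem iteratedDeriv_eval_div_eval_div_factorial_of_dvd [CharZero 𝕜] {A B r : 𝕜[X]} {a : 𝕜}
    {m s : ℕ} (hms : m < s) (hB : B.eval a ≠ 0) (h : (X - C a) ^ s ∣ A - r * B) :
    iteratedDeriv m (fun z => A.eval z / B.eval z) a / (Nat.factorial m) =
      (taylor a r).coeff m := by
  rw [iteratedDeriv_eval_div_eval_of_dvd hms hB h, taylor_coeff, ← factorial_smul_hasseDeriv,
    LinearMap.smul_apply, nsmul_eq_mul, eval_mul, eval_natCast]
  field_simp [Nat.factorial_ne_zero]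

theorem exists_wronskian_mul_eq_of_residues_eq_zero [CharZero 𝕜] {ι : Type*} [Fintype ι]
    [DecidableEq ι] {q : ι → 𝕜} (hq : Function.Injective q) {k : ι → ℕ} (hk : ∀ i, 1 ≤ k i)
    {A : 𝕜[X]} (hA : A.natDegree < ∑ i, k i)
    (hres : ∀ j, iteratedDeriv (k j - 1)
      (fun z => A.eval z / ∏ i ∈ univ.erase j, (z - q i) ^ k i) (q j) /
        (Nat.factorial (k j - 1)) = 0) :
    ∃ P : 𝕜[X], P.natDegree ≤ ∑ i, (k i - 1) ∧
      wronskian (∏ i, (X - C (q i)) ^ (k i - 1)) P * ∏ i, (X - C (q i)) ^ k i =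
        A * (∏ i, (X - C (q i)) ^ (k i - 1)) ^ 2 := by
  set g : ι → 𝕜[X] := fun i => (X - C (q i)) ^ k i
  have hg : ∀ i ∈ univ, (g i).Monic := fun i _ => (monic_X_sub_C _).pow _
  have hdegA : A.degree < (∏ i, g i).degree := by
    refine degree_lt_degree ?_
    rw [natDegree_prod_of_monic _ _ hg]
    simpa [g] using hA
  obtain ⟨r, hr, hAr⟩ := exists_eq_sum_mul_prod_erase hg
    (fun i _ j _ hij => (pairwise_coprime_X_sub_C hq hij).pow) hdegA
  have hres' : ∀ j, (taylor (q j) (r j)).coeff (k j - 1) = 0 := by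
    intro j
    have hB : (∏ i ∈ univ.erase j, g i).eval (q j) ≠ 0 :=
      eval_prod_X_sub_C_pow_ne_zero k fun i hi => hq.ne (ne_of_mem_erase hi).symm
    have hdvd : g j ∣ A - r j * ∏ i ∈ univ.erase j, g i := by
      rw [hAr, ← add_sum_erase univ _ (mem_univ j), add_sub_cancel_left]
      exact dvd_sum fun i hi => dvd_mul_of_dvd_right
        (dvd_prod_of_mem g (mem_erase.2 ⟨(ne_of_mem_erase hi).symm, mem_univ j⟩)) _
    rw [← iteratedDeriv_eval_div_eval_div_factorial_of_dvd (by have := hk j; omega) hB hdvd]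
    simpa [g, eval_prod] using hres j
  choose S hSdeg hS using fun j => exists_wronskian_X_sub_C_pow_eq (q j) (k j - 1) (hres' j)
  refine ⟨∑ i, S i * ∏ j ∈ univ.erase i, (X - C (q j)) ^ (k j - 1), ?_, ?_⟩
  · have hrdeg : ∀ i, (r i).natDegree < k i := fun i => by
      rcases eq_or_ne (r i) 0 with h | h
      · rw [h, natDegree_zero]
        exact hk i
      · exact (natDegree_lt_iff_degree_lt h).2 (by simpa [g] using hr i (mem_univ i))
    refine natDegree_sum_le_of_forall_le _ _ fun i _ => natDegree_mul_le.trans ?_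
    rw [← add_sum_erase univ (fun i => k i - 1) (mem_univ i)]
    refine add_le_add ((hSdeg i).trans (Nat.le_sub_one_of_lt (hrdeg i)))
      ((natDegree_prod_le _ _).trans (sum_le_sum fun j _ => ?_))
    rw [natDegree_pow, natDegree_X_sub_C, mul_one]
  · rw [hAr]
    refine wronskian_prod_sum_mul_prod_erase univ fun i _ => ?_
    simpa only [Nat.sub_add_cancel (hk i)] using hS i

end Analytic

end Polynomial

/-- The residue at `q j` is encoded as the `(k j - 1)`-st Taylor coefficient at `q j` of the
regular part `c (z - z₀) ^ m₀ / ∏ i ≠ j, (z - q i) ^ k i`. -/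
theorem stmt_15_general (n : ℕ) (hn : 2 ≤ n) (z₀ : ℂ) (q : Fin n → ℂ)
    (hq : Function.Injective q) (hzq : ∀ j, z₀ ≠ q j)
    (m₀ : ℕ) (k : Fin n → ℕ) (hk : ∀ j, 2 ≤ k j)
    (hdeg : (m₀ : ℤ) - ∑ j, (k j : ℤ) = -2)
    (c : ℂ) (hc : c ≠ 0) :
    ∃ j : Fin n,
      iteratedDeriv (k j - 1)
          (fun z => c * (z - z₀) ^ m₀ / ∏ i ∈ univ.erase j, (z - q i) ^ k i)
          (q j) / (Nat.factorial (k j - 1)) ≠ 0 := by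
  by_contra! hres
  have hk₁ : ∀ j, 1 ≤ k j := fun j => one_le_two.trans (hk j)
  have hsum : ∑ j, k j = m₀ + 2 := by
    have : ((∑ j, k j : ℕ) : ℤ) = m₀ + 2 := by push_cast; linarith
    exact_mod_cast this
  have hsum_pred : ∑ j, (k j - 1) + n = ∑ j, k j := by
    rw [← sum_congr rfl fun j _ => Nat.sub_add_cancel (hk₁ j), sum_add_distrib, sum_const,
      card_univ, Fintype.card_fin, smul_eq_mul, mul_one]
  obtain ⟨P, hPdeg, hP⟩ := exists_wronskian_mul_eq_of_residues_eq_zero hq hk₁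
    (A := C c * (X - C z₀) ^ m₀)
    (by rw [natDegree_C_mul hc, natDegree_pow, natDegree_X_sub_C]; omega)
    (fun j => by simpa using hres j)
  have hQdeg : (∏ i, (X - C (q i)) ^ (k i - 1)).natDegree ≤ ∑ i, (k i - 1) :=
    (natDegree_prod_le _ _).trans (sum_le_sum fun i _ => by simp)
  have := lt_max_natDegree_of_wronskian_mul_eq hc
    (eval_prod_X_sub_C_pow_ne_zero _ fun i _ => hzq i)
    (eval_prod_X_sub_C_pow_ne_zero _ fun i _ => hzq i) hP
  omega

/-- Genus-zero residue lemma: a meromorphic differential on ℙ¹ with a unique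
zero and n ≥ 2 higher-order poles has a nonzero residue at some pole.  The
residue at q_j is the (k_j−1)st Taylor coefficient at q_j of the regular part
c·(z−z₀)^{m₀}/∏_{i≠j}(z−q_i)^{k_i}. -/
theorem stmt_15 (n : ℕ) (hn : 2 ≤ n) (z₀ : ℂ) (q : Fin n → ℂ)
    (hq : Function.Injective q) (hzq : ∀ j, z₀ ≠ q j)
    (m₀ : ℕ) (hm₀ : 1 ≤ m₀) (k : Fin n → ℕ) (hk : ∀ j, 2 ≤ k j)
    (hdeg : (m₀ : ℤ) - ∑ j, (k j : ℤ) = -2)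
    (c : ℂ) (hc : c ≠ 0) :
    ∃ j : Fin n,
      iteratedDeriv (k j - 1)
          (fun z => c * (z - z₀) ^ m₀ / ∏ i ∈ univ.erase j, (z - q i) ^ k i)
          (q j) / (Nat.factorial (k j - 1)) ≠ 0 :=
  stmt_15_general n hn z₀ q hq hzq m₀ k hk hdeg c hc
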